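/- Let A be a real n×m matrix of rank k. Then (−1)^k times the coefficient of x^{m−k} in the characteristic polynomial det(x·I − AᵀA) of the m×m matrix AᵀA equals Σ_{(I,J)} det(A_{I,J})², the sum running over all pairs (I,J) with I a k-element subset of the rows and J a k-element subset of the columns of A. (This quantity is the pseudo-determinant Det(AᵀA), the product of the k nonzero eigenvalues of AᵀA.) -/

import Mathlib

/-!
Expanding the characteristic polynomial into principal minors, `(-1)^k` times the coefficient of
`x^(m-k)` in `det (x - AᵀA)` is the sum of the `k × k` principal minors `det (A_Jᵀ A_J)`, where
`A_J` is the `n × k` matrix of the columns `J` of `A`. By Cauchy–Binet each of these is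
`∑_I det (A_{I,J})²`. Cauchy–Binet itself comes from expanding `det (A * B)` multilinearly in the
rows: a choice of rows `φ : Fin k → κ` of `B` contributes nothing unless it is injective, and an
injective `φ` factors uniquely as the increasing enumeration of its image followed by a permutation.
-/

open Matrix

/-- The minor of a real `n × m` matrix `A` given by a `k`-element set `I` of row indices and
a `k`-element set `J` of column indices. For `k = 0` it equals `1`. -/
def Matrix.minorOn {n m k : ℕ} (A : Matrix (Fin n) (Fin m) ℝ)
    (I : {s : Finset (Fin n) // s.card = k}) (J : {s : Finset (Fin m) // s.card = k}) : ℝ :=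
  (A.submatrix (I.1.orderEmbOfFin I.2) (J.1.orderEmbOfFin J.2)).det

open Finset Function

section

variable {κ : Type*} [LinearOrder κ] {k : ℕ}

theorem Finset.orderEmbOfFin_comp_perm_injective :
    Injective fun p : {s : Finset κ // s.card = k} × Equiv.Perm (Fin k) =>
      p.1.1.orderEmbOfFin p.1.2 ∘ p.2 := by
  rintro ⟨⟨s, hs⟩, σ⟩ ⟨⟨t, ht⟩, τ⟩ h
  have hst : s = t := by
    have hrange := congrArg Set.range h
    simp only [EquivLike.range_comp, range_orderEmbOfFin] at hrange
    exact_mod_cast hrange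
  subst hst
  exact Prod.ext rfl (Equiv.ext fun i => (s.orderEmbOfFin hs).injective (congrFun h i))

theorem Finset.exists_orderEmbOfFin_comp_perm {φ : Fin k → κ} (hφ : Injective φ) :
    ∃ (s : {s : Finset κ // s.card = k}) (σ : Equiv.Perm (Fin k)),
      s.1.orderEmbOfFin s.2 ∘ σ = φ := by
  have hcard : (univ.image φ).card = k := by simp [card_image_of_injective _ hφ]
  let e := (univ.image φ).orderIsoOfFin hcard
  let g : Fin k → Fin k := fun i => e.symm ⟨φ i, mem_image_of_mem φ (mem_univ i)⟩
  have hg : Injective g := fun i j hij =>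
    hφ (by simpa [g] using congrArg (fun x => (e x : κ)) hij)
  refine ⟨⟨_, hcard⟩, Equiv.ofBijective g (Finite.injective_iff_bijective.mp hg), ?_⟩
  funext i
  simp only [Function.comp_apply, Equiv.ofBijective_apply, g, e, ← coe_orderIsoOfFin_apply,
    OrderIso.apply_symm_apply]

end

namespace Matrix

variable {R : Type*} [CommRing R]

theorem det_submatrix_orderEmbOfFin {κ : Type*} [LinearOrder κ] {k : ℕ} (M : Matrix κ κ R)
    (s : Finset κ) (h : s.card = k) :
    (M.submatrix (s.orderEmbOfFin h) (s.orderEmbOfFin h)).det =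
      (M.submatrix ((↑) : s → κ) (↑)).det := by
  rw [← det_submatrix_equiv_self (s.orderIsoOfFin h).toEquiv, submatrix_submatrix]
  rfl

theorem neg_one_pow_mul_charpoly_coeff {κ : Type*} [Fintype κ] [LinearOrder κ] {k : ℕ}
    (M : Matrix κ κ R) (hk : k ≤ Fintype.card κ) :
    (-1) ^ k * M.charpoly.coeff (Fintype.card κ - k) =
      ∑ s : {s : Finset κ // s.card = k},
        (M.submatrix (s.1.orderEmbOfFin s.2) (s.1.orderEmbOfFin s.2)).det := by
  rw [charpoly_coeff_eq_sum_minors M k hk, ← mul_assoc, ← pow_add, Even.neg_one_pow ⟨k, rfl⟩,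
    one_mul, sum_subtype (p := fun s : Finset κ => s.card = k) _ (by simp [mem_powersetCard])]
  exact sum_congr rfl fun s _ => (det_submatrix_orderEmbOfFin M s.1 s.2).symm

theorem det_mul_eq_sum_prod_mul_det_submatrix {ι κ : Type*} [Fintype ι] [DecidableEq ι]
    [Fintype κ] (A : Matrix ι κ R) (B : Matrix κ ι R) :
    (A * B).det = ∑ φ : ι → κ, (∏ i, A i (φ i)) * (B.submatrix φ id).det := by
  let D := (detRowAlternating : (ι → R) [⋀^ι]→ₗ[R] R).toMultilinearMap
  have hrows : (A * B).det = D (fun i => ∑ r, A i r • B r) := by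
    congr 1
    funext i j
    simp [mul_apply]
  rw [hrows, D.map_sum]
  refine sum_congr rfl fun φ _ => ?_
  rw [D.map_smul_univ]
  rfl

theorem sum_perm_prod_mul_det_submatrix_comp {ι κ : Type*} [Fintype ι] [DecidableEq ι]
    (A : Matrix ι κ R) (B : Matrix κ ι R) (e : ι → κ) :
    ∑ σ : Equiv.Perm ι, (∏ i, A i (e (σ i))) * (B.submatrix (e ∘ σ) id).det =
      (A.submatrix id e).det * (B.submatrix e id).det := by
  calc ∑ σ : Equiv.Perm ι, (∏ i, A i (e (σ i))) * (B.submatrix (e ∘ σ) id).det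
      = ∑ σ : Equiv.Perm ι, (Equiv.Perm.sign σ * ∏ i, (A.submatrix id e)ᵀ (σ i) i) *
          (B.submatrix e id).det := by
        refine sum_congr rfl fun σ _ => ?_
        rw [show B.submatrix (e ∘ σ) id = (B.submatrix e id).submatrix σ id from rfl, det_permute]
        simp only [transpose_apply, submatrix_apply, id]
        ring
    _ = (A.submatrix id e).det * (B.submatrix e id).det := by
        rw [← sum_mul, ← det_apply', det_transpose]

theorem det_mul_eq_sum_det_submatrix_mul_det_submatrix {κ : Type*} [Fintype κ] [LinearOrder κ]
    {k : ℕ} (A : Matrix (Fin k) κ R) (B : Matrix κ (Fin k) R) :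
    (A * B).det = ∑ s : {s : Finset κ // s.card = k},
      (A.submatrix id (s.1.orderEmbOfFin s.2)).det *
        (B.submatrix (s.1.orderEmbOfFin s.2) id).det := by
  rw [det_mul_eq_sum_prod_mul_det_submatrix]
  symm
  calc _ = ∑ p : {s : Finset κ // s.card = k} × Equiv.Perm (Fin k),
        (∏ i, A i (p.1.1.orderEmbOfFin p.1.2 (p.2 i))) *
          (B.submatrix (p.1.1.orderEmbOfFin p.1.2 ∘ p.2) id).det := by
        rw [Fintype.sum_prod_type]
        exact sum_congr rfl fun s _ => (sum_perm_prod_mul_det_submatrix_comp A B _).symm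
    _ = _ := by
        refine sum_of_injOn _ orderEmbOfFin_comp_perm_injective.injOn (by simp [Set.MapsTo])
          (fun φ _ hφ => ?_) (fun _ _ => rfl)
        have hφ_not_inj : ¬ Injective φ := fun hinj => hφ <| by
          obtain ⟨s, σ, h⟩ := exists_orderEmbOfFin_comp_perm hinj
          exact ⟨(s, σ), by simp, h⟩
        obtain ⟨i, j, hij, hne⟩ := not_injective_iff.mp hφ_not_inj
        rw [det_zero_of_row_eq hne (funext fun _ => by simp [hij]), mul_zero]

end Matrix

/-- If `A` is a real `n × m` matrix of rank `k`, then `(-1)^k` times the coefficient of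
`x^{m-k}` in the characteristic polynomial of `Aᵀ A` (i.e. the pseudo-determinant
`Det(Aᵀ A)`) equals the sum of the squares of all `k × k` minors of `A`. -/
theorem pdet_gram_eq_sum_sq_minors {n m : ℕ} (A : Matrix (Fin n) (Fin m) ℝ) (k : ℕ)
    (hk : A.rank = k) :
    (-1 : ℝ) ^ k * (Aᵀ * A).charpoly.coeff (m - k) =
      ∑ I : {s : Finset (Fin n) // s.card = k}, ∑ J : {s : Finset (Fin m) // s.card = k},
        (A.minorOn I J) ^ 2 := by
  have hkm : k ≤ Fintype.card (Fin m) := by simpa [← hk] using A.rank_le_width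
  have hgram (J : {s : Finset (Fin m) // s.card = k}) :
      (Aᵀ * A).submatrix (J.1.orderEmbOfFin J.2) (J.1.orderEmbOfFin J.2) =
        (A.submatrix id (J.1.orderEmbOfFin J.2))ᵀ * A.submatrix id (J.1.orderEmbOfFin J.2) := by
    rw [submatrix_mul _ _ _ id _ bijective_id, transpose_submatrix]
  calc (-1 : ℝ) ^ k * (Aᵀ * A).charpoly.coeff (m - k)
      = ∑ J : {s : Finset (Fin m) // s.card = k},
          ((Aᵀ * A).submatrix (J.1.orderEmbOfFin J.2) (J.1.orderEmbOfFin J.2)).det := by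
        simpa using neg_one_pow_mul_charpoly_coeff (Aᵀ * A) hkm
    _ = ∑ J : {s : Finset (Fin m) // s.card = k}, ∑ I : {s : Finset (Fin n) // s.card = k},
          (A.minorOn I J) ^ 2 := by
        refine sum_congr rfl fun J _ => ?_
        rw [hgram, det_mul_eq_sum_det_submatrix_mul_det_submatrix]
        refine sum_congr rfl fun I _ => ?_
        rw [← transpose_submatrix, det_transpose, sq]
        rfl
    _ = _ := sum_comm
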